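/- Let φ ∈ ℳ and let l ≥ 0 be an integer with n ≥ 1. If ∫₁^∞ dt/(t φ(t)²) < ∞, then every w ∈ H^{l+n/2, φ}(ℝⁿ) (after modification on a null set) belongs to C^l(ℝⁿ) with bounded derivatives up to order l, and there is a constant c > 0 independent of w such that sup_{|α| ≤ l} ‖∂^α w‖_∞ ≤ c ‖w‖_{l+n/2, φ}. -/

import Mathlib

/-!
Fourier inversion writes `∂^α w` as the inverse Fourier transform of `(2πiξ)^α ŵ`, so
`‖∂^α w‖_∞ ≤ (2π)^|α| ∫ |ξ|^|α| |ŵ(ξ)| dξ`. Splitting `|ξ|^|α| ≤ ⟨ξ⟩^l` as the product of the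
weight `⟨ξ⟩^{l+n/2} φ(⟨ξ⟩)` of `H^{l+n/2,φ}` and the dual weight `⟨ξ⟩^{-n/2} φ(⟨ξ⟩)⁻¹`,
Cauchy–Schwarz bounds this by `‖w‖_{l+n/2,φ}` times the `L²` norm of the dual weight. In polar
coordinates that norm becomes `∫₀^∞ r^{n-1} ⟨r⟩^{-n} φ(⟨r⟩)^{-2} dr`, and the substitution
`t = ⟨r⟩ = √(1 + r²)` turns its tail into `∫₁^∞ dt / (t φ(t)²)`.
-/

open Filter MeasureTheory ENNReal

noncomputable section

/-- Slowly varying at infinity in the sense of Karamata. -/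
def IsSlowlyVarying (φ : ℝ → ℝ) : Prop :=
  ∀ l : ℝ, 0 < l → Tendsto (fun t => φ (l * t) / φ t) atTop (nhds 1)

/-- The class `ℳ` of regularity parameters. -/
def MemM (φ : ℝ → ℝ) : Prop :=
  Measurable φ ∧ (∀ t, 1 ≤ t → 0 < φ t) ∧
  (∀ K : Set ℝ, IsCompact K → K ⊆ Set.Ici 1 →
    ∃ a b : ℝ, 0 < a ∧ ∀ t ∈ K, a ≤ φ t ∧ φ t ≤ b) ∧
  IsSlowlyVarying φ

/-- The smoothed absolute value `⟨ξ⟩ = (1 + |ξ|²)^{1/2}`. -/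
def jap {n : ℕ} (ξ : EuclideanSpace ℝ (Fin n)) : ℝ := Real.sqrt (1 + ‖ξ‖ ^ 2)

/-- The weight `⟨ξ⟩^s φ(⟨ξ⟩)` defining the Hörmander space `H^{s,φ}`. -/
def hWeight (s : ℝ) (φ : ℝ → ℝ) {n : ℕ} (ξ : EuclideanSpace ℝ (Fin n)) : ℝ :=
  jap ξ ^ s * φ (jap ξ)

/-- The square of the Hörmander norm `‖·‖_{s,φ}`, applied to the Fourier transform `ŵ`
of a tempered distribution `w`:  `∫ ⟨ξ⟩^{2s} φ(⟨ξ⟩)² |ŵ(ξ)|² dξ`. -/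
def hNormSq (n : ℕ) (s : ℝ) (φ : ℝ → ℝ) (w : EuclideanSpace ℝ (Fin n) → ℂ) : ℝ≥0∞ :=
  ∫⁻ ξ, ENNReal.ofReal (hWeight s φ ξ ^ 2) * (‖w ξ‖₊ : ℝ≥0∞) ^ 2

namespace Real

open FourierTransform

variable {V E : Type*} [NormedAddCommGroup V] [InnerProductSpace ℝ V] [FiniteDimensional ℝ V]
  [MeasurableSpace V] [BorelSpace V] [NormedAddCommGroup E] [NormedSpace ℂ E] {f : V → E}
  {N : ℕ∞}

lemma contDiff_fourierInv (hf : ∀ n : ℕ, n ≤ N → Integrable (fun v ↦ ‖v‖ ^ n * ‖f v‖)) :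
    ContDiff ℝ N (𝓕⁻ f) := by
  rw [show 𝓕⁻ f = 𝓕 f ∘ Neg.neg from funext (fourierInv_eq_fourier_neg f)]
  exact (contDiff_fourier hf).comp contDiff_neg

lemma norm_iteratedFDeriv_fourier_le
    (hf : ∀ n : ℕ, n ≤ N → Integrable (fun v ↦ ‖v‖ ^ n * ‖f v‖))
    (h'f : AEStronglyMeasurable f) {n : ℕ} (hn : n ≤ N) (x : V) :
    ‖iteratedFDeriv ℝ n (𝓕 f) x‖ ≤ (2 * π) ^ n * ∫ v, ‖v‖ ^ n * ‖f v‖ := by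
  rw [iteratedFDeriv_fourier hf h'f hn, ← integral_const_mul]
  refine (VectorFourier.norm_fourierIntegral_le_integral_norm _ _ _ _ _).trans ?_
  refine integral_mono (VectorFourier.integrable_fourierPowSMulRight _ (hf n hn) h'f).norm
    ((hf n hn).const_mul _) fun v ↦ ?_
  calc ‖VectorFourier.fourierPowSMulRight (innerSL ℝ) f v n‖
      ≤ (2 * π * ‖innerSL ℝ (E := V)‖) ^ n * ‖v‖ ^ n * ‖f v‖ :=
        VectorFourier.norm_fourierPowSMulRight_le _ _ _ _
    _ ≤ (2 * π) ^ n * (‖v‖ ^ n * ‖f v‖) := by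
        rw [← mul_assoc]
        gcongr ?_ ^ n * _ * _
        exact mul_le_of_le_one_right (by positivity) (norm_innerSL_le ℝ)

lemma norm_iteratedFDeriv_fourierInv_le
    (hf : ∀ n : ℕ, n ≤ N → Integrable (fun v ↦ ‖v‖ ^ n * ‖f v‖))
    (h'f : AEStronglyMeasurable f) {n : ℕ} (hn : n ≤ N) (x : V) :
    ‖iteratedFDeriv ℝ n (𝓕⁻ f) x‖ ≤ (2 * π) ^ n * ∫ v, ‖v‖ ^ n * ‖f v‖ := by
  rw [show 𝓕⁻ f = 𝓕 f ∘ LinearIsometryEquiv.neg ℝ from funext (fourierInv_eq_fourier_neg f),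
    LinearIsometryEquiv.norm_iteratedFDeriv_comp_right]
  exact norm_iteratedFDeriv_fourier_le hf h'f hn (-x)

end Real

section Radial

open Set

lemma hasDerivAt_sqrt_one_add_sq (y : ℝ) :
    HasDerivAt (fun z : ℝ ↦ √(1 + z ^ 2)) (y / √(1 + y ^ 2)) y := by
  convert ((hasDerivAt_pow 2 y).const_add 1).sqrt (by positivity) using 1
  field_simp
  ring

lemma one_lt_sqrt_one_add_sq {y : ℝ} (hy : y ≠ 0) : 1 < √(1 + y ^ 2) := by
  rw [Real.lt_sqrt zero_le_one]
  have := pow_pos (abs_pos.2 hy) 2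
  rw [sq_abs] at this
  linarith

lemma integrableOn_Ioi_mul_comp_sqrt_one_add_sq {G : ℝ → ℝ} (hG : IntegrableOn G (Ioi 1)) :
    IntegrableOn (fun y ↦ y / √(1 + y ^ 2) * G √(1 + y ^ 2)) (Ioi 0) := by
  have hinj : InjOn (fun y : ℝ ↦ √(1 + y ^ 2)) (Ioi 0) := by
    intro p hp q hq hpq
    dsimp only at hpq
    rw [Real.sqrt_inj (by positivity) (by positivity), add_left_cancel_iff] at hpq
    exact (pow_left_inj₀ (le_of_lt hp) (le_of_lt hq) two_ne_zero).1 hpq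
  have himg : (fun y : ℝ ↦ √(1 + y ^ 2)) '' Ioi 0 ⊆ Ioi 1 := by
    rintro _ ⟨y, hy, rfl⟩
    exact one_lt_sqrt_one_add_sq (ne_of_gt hy)
  refine ((integrableOn_image_iff_integrableOn_abs_deriv_smul measurableSet_Ioi
    (fun y _ ↦ (hasDerivAt_sqrt_one_add_sq y).hasDerivWithinAt) hinj G).1
    (hG.mono_set himg)).congr_fun (fun y (hy : 0 < y) ↦ ?_) measurableSet_Ioi
  dsimp only
  rw [abs_of_pos (by positivity), smul_eq_mul]

lemma integrableOn_Ioi_comp_sqrt_one_add_sq {G : ℝ → ℝ} (hGm : Measurable G)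
    (hG : IntegrableOn G (Ioi 1)) {C : ℝ} (hC : ∀ t ∈ Icc 1 2, ‖G t‖ ≤ C) :
    IntegrableOn (fun y ↦ G √(1 + y ^ 2)) (Ioi 0) := by
  have hmeas : AEStronglyMeasurable (fun y : ℝ ↦ G √(1 + y ^ 2)) :=
    (hGm.comp (by fun_prop)).aestronglyMeasurable
  rw [← Ioc_union_Ioi_eq_Ioi zero_le_one]
  refine IntegrableOn.union ?_ ?_
  · refine Measure.integrableOn_of_bounded measure_Ioc_lt_top.ne hmeas
      (ae_restrict_of_forall_mem measurableSet_Ioc fun y hy ↦ hC _ ⟨?_, ?_⟩)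
    · exact (one_lt_sqrt_one_add_sq hy.1.ne').le
    · rw [Real.sqrt_le_left zero_le_two]
      nlinarith [hy.1, hy.2]
  · -- for `y ≥ 1` the Jacobian `y / √(1 + y²)` of `t = √(1 + y²)` is at least `1 / √2`
    refine ((integrableOn_Ioi_mul_comp_sqrt_one_add_sq hG).mono_set
      (Ioi_subset_Ioi zero_le_one)).norm.const_mul √2 |>.mono' hmeas.restrict
      (ae_restrict_of_forall_mem measurableSet_Ioi fun y (hy : 1 < y) ↦ ?_)
    have hh : 0 < √(1 + y ^ 2) := by positivity
    have h2 : √(1 + y ^ 2) ≤ √2 * y := by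
      rw [Real.sqrt_le_left (by positivity), mul_pow, Real.sq_sqrt zero_le_two]
      nlinarith
    rw [norm_mul, Real.norm_of_nonneg (by positivity : 0 ≤ y / √(1 + y ^ 2)), ← mul_assoc]
    refine le_mul_of_one_le_left (norm_nonneg _) ?_
    rw [mul_div_assoc', le_div_iff₀ hh, one_mul]
    exact h2

end Radial

section Japanese

open Set

variable {n : ℕ}

lemma one_le_jap (ξ : EuclideanSpace ℝ (Fin n)) : 1 ≤ jap ξ :=
  Real.one_le_sqrt.2 (le_add_of_nonneg_right (sq_nonneg _))

lemma jap_pos (ξ : EuclideanSpace ℝ (Fin n)) : 0 < jap ξ :=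
  zero_lt_one.trans_le (one_le_jap ξ)

lemma norm_le_jap (ξ : EuclideanSpace ℝ (Fin n)) : ‖ξ‖ ≤ jap ξ :=
  (le_abs_self _).trans (Real.abs_le_sqrt (le_add_of_nonneg_left zero_le_one))

@[fun_prop]
lemma measurable_jap : Measurable (jap : EuclideanSpace ℝ (Fin n) → ℝ) := by
  unfold jap
  fun_prop

end Japanese

section Weights

variable {n : ℕ} {φ : ℝ → ℝ}

lemma hWeight_nonneg (hφ : ∀ t, 1 ≤ t → 0 < φ t) (s : ℝ) (ξ : EuclideanSpace ℝ (Fin n)) :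
    0 ≤ hWeight s φ ξ := by
  have := hφ _ (one_le_jap ξ)
  have := jap_pos ξ
  unfold hWeight
  positivity

lemma measurable_hWeight (hm : Measurable φ) (s : ℝ) :
    Measurable fun ξ : EuclideanSpace ℝ (Fin n) ↦ hWeight s φ ξ := by
  unfold hWeight
  fun_prop

lemma hWeight_mul_hWeight_inv {ξ : EuclideanSpace ℝ (Fin n)} (hξ : φ (jap ξ) ≠ 0) (s r : ℝ) :
    hWeight s φ ξ * hWeight r φ⁻¹ ξ = jap ξ ^ (s + r) := by
  rw [Real.rpow_add (jap_pos ξ), hWeight, hWeight, Pi.inv_apply,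
    mul_mul_mul_comm, mul_inv_cancel₀ hξ, mul_one]

lemma hWeight_neg_half_inv_sq (φ : ℝ → ℝ) (ξ : EuclideanSpace ℝ (Fin n)) :
    hWeight (-(n / 2)) φ⁻¹ ξ ^ 2 = 1 / (jap ξ ^ n * φ (jap ξ) ^ 2) := by
  rw [hWeight, Pi.inv_apply, mul_pow, ← Real.rpow_natCast _ 2, ← Real.rpow_mul (jap_pos ξ).le,
    show -(n / 2 : ℝ) * (2 : ℕ) = -n by push_cast; ring, Real.rpow_neg (jap_pos ξ).le,
    Real.rpow_natCast, inv_pow, ← mul_inv, one_div]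

lemma hNormSq_eq_lintegral_sq (hφ : ∀ t, 1 ≤ t → 0 < φ t) (s : ℝ)
    (w : EuclideanSpace ℝ (Fin n) → ℂ) :
    hNormSq n s φ w = ∫⁻ ξ, ENNReal.ofReal (hWeight s φ ξ * ‖w ξ‖) ^ 2 := by
  refine lintegral_congr fun ξ ↦ ?_
  rw [ENNReal.ofReal_mul (hWeight_nonneg hφ s ξ), mul_pow,
    ← ENNReal.ofReal_pow (hWeight_nonneg hφ s ξ), ofReal_norm, enorm_eq_nnnorm]

end Weights

section DualWeight

open Set

variable {n : ℕ}

lemma integrable_hWeight_neg_half_inv_sq {φ : ℝ → ℝ} (hm : Measurable φ) {a : ℝ} (ha : 0 < a)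
    (hφa : ∀ t ∈ Icc 1 2, a ≤ φ t) (hint : IntegrableOn (fun t ↦ 1 / (t * φ t ^ 2)) (Ioi 1)) :
    Integrable (fun ξ : EuclideanSpace ℝ (Fin n) ↦ hWeight (-(n / 2)) φ⁻¹ ξ ^ 2) := by
  simp only [hWeight_neg_half_inv_sq]
  rcases n.eq_zero_or_pos with rfl | hn
  · exact Integrable.of_finite
  have : Nontrivial (EuclideanSpace ℝ (Fin n)) :=
    Module.nontrivial_of_finrank_pos (R := ℝ) (by rwa [finrank_euclideanSpace_fin])
  have hrad := integrableOn_Ioi_comp_sqrt_one_add_sq (by fun_prop) hint (C := 1 / a ^ 2)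
    fun t ht ↦ by
      have := hφa t ht
      rw [Real.norm_of_nonneg (by have := ht.1; positivity)]
      gcongr
      exact (pow_le_pow_left₀ ha.le this 2).trans (le_mul_of_one_le_left (sq_nonneg _) ht.1)
  refine (integrable_fun_norm_addHaar volume
    (f := fun r ↦ 1 / (√(1 + r ^ 2) ^ n * φ √(1 + r ^ 2) ^ 2))).2 ?_
  rw [finrank_euclideanSpace_fin]
  refine hrad.mono' (by fun_prop) (ae_restrict_of_forall_mem measurableSet_Ioi fun y hy ↦ ?_)
  have hy0 : 0 < y := hy
  have hh : 0 < √(1 + y ^ 2) := by positivity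
  have hyh : y ≤ √(1 + y ^ 2) := (le_abs_self y).trans (Real.abs_le_sqrt (by linarith))
  obtain ⟨m, rfl⟩ := Nat.exists_eq_add_of_lt hn
  rw [smul_eq_mul, Real.norm_of_nonneg (by positivity), zero_add, Nat.add_sub_cancel,
    show y ^ m * (1 / (√(1 + y ^ 2) ^ (m + 1) * φ √(1 + y ^ 2) ^ 2)) =
      (y / √(1 + y ^ 2)) ^ m * (1 / (√(1 + y ^ 2) * φ √(1 + y ^ 2) ^ 2)) by ring]
  exact mul_le_of_le_one_left (by positivity)
    (pow_le_one₀ (by positivity) ((div_le_one hh).2 hyh))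

lemma MemM.integrable_hWeight_neg_half_inv_sq {φ : ℝ → ℝ} (hφ : MemM φ)
    (hint : ∫⁻ t in Ici (1 : ℝ), ENNReal.ofReal (1 / (t * φ t ^ 2)) < ⊤) :
    Integrable (fun ξ : EuclideanSpace ℝ (Fin n) ↦ hWeight (-(n / 2)) φ⁻¹ ξ ^ 2) := by
  obtain ⟨hm, -, hcomp, -⟩ := hφ
  obtain ⟨a, _, ha, hab⟩ := hcomp (Icc 1 2) isCompact_Icc fun t ht ↦ ht.1
  have hG : IntegrableOn (fun t ↦ 1 / (t * φ t ^ 2)) (Ici 1) :=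
    ⟨(by fun_prop : Measurable fun t ↦ 1 / (t * φ t ^ 2)).aestronglyMeasurable,
      (hasFiniteIntegral_iff_ofReal (ae_restrict_of_forall_mem measurableSet_Ici
        fun t (ht : 1 ≤ t) ↦ by positivity)).2 hint⟩
  exact _root_.integrable_hWeight_neg_half_inv_sq hm ha (fun t ht ↦ (hab t ht).1)
    (hG.mono_set Ioi_subset_Ici_self)

end DualWeight

section Moments

variable {n : ℕ} {φ : ℝ → ℝ}

lemma lintegral_norm_pow_mul_le (hm : Measurable φ) (hφ : ∀ t, 1 ≤ t → 0 < φ t)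
    {w : EuclideanSpace ℝ (Fin n) → ℂ} (hw : AEMeasurable w) {i l : ℕ} (hi : i ≤ l) :
    ∫⁻ ξ, ENNReal.ofReal (‖ξ‖ ^ i * ‖w ξ‖) ≤
      hNormSq n (l + n / 2) φ w ^ (1 / 2 : ℝ) *
        (∫⁻ ξ : EuclideanSpace ℝ (Fin n), ENNReal.ofReal (hWeight (-(n / 2)) φ⁻¹ ξ ^ 2)) ^
          (1 / 2 : ℝ) := by
  calc ∫⁻ ξ, ENNReal.ofReal (‖ξ‖ ^ i * ‖w ξ‖)
      ≤ ∫⁻ ξ, ENNReal.ofReal (hWeight (l + n / 2) φ ξ * ‖w ξ‖) *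
          ENNReal.ofReal (hWeight (-(n / 2)) φ⁻¹ ξ) := by
        refine lintegral_mono fun ξ ↦ ?_
        have hξ := (hφ _ (one_le_jap ξ)).ne'
        rw [← ENNReal.ofReal_mul (mul_nonneg (hWeight_nonneg hφ _ ξ) (norm_nonneg _)),
          mul_right_comm, hWeight_mul_hWeight_inv hξ, add_neg_cancel_right, Real.rpow_natCast]
        gcongr
        exact (pow_le_pow_left₀ (norm_nonneg _) (norm_le_jap ξ) i).trans
          (pow_le_pow_right₀ (one_le_jap ξ) hi)
    _ ≤ (∫⁻ ξ, ENNReal.ofReal (hWeight (l + n / 2) φ ξ * ‖w ξ‖) ^ (2 : ℝ)) ^ (1 / 2 : ℝ) *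
          (∫⁻ ξ, ENNReal.ofReal (hWeight (-(n / 2)) φ⁻¹ ξ) ^ (2 : ℝ)) ^ (1 / 2 : ℝ) :=
        ENNReal.lintegral_mul_le_Lp_mul_Lq _ Real.HolderConjugate.two_two
          ((measurable_hWeight hm _).aemeasurable.mul hw.norm).ennreal_ofReal
          (measurable_hWeight hm.inv _).ennreal_ofReal.aemeasurable
    _ = _ := by
        have hφ' : ∀ t, 1 ≤ t → 0 < φ⁻¹ t := fun t ht ↦ inv_pos.2 (hφ t ht)
        simp only [ENNReal.rpow_two, hNormSq_eq_lintegral_sq hφ,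
          ← ENNReal.ofReal_pow (hWeight_nonneg hφ' _ _)]

lemma integrable_norm_pow_mul (hm : Measurable φ) (hφ : ∀ t, 1 ≤ t → 0 < φ t)
    (hk : Integrable fun ξ : EuclideanSpace ℝ (Fin n) ↦ hWeight (-(n / 2)) φ⁻¹ ξ ^ 2)
    {w : EuclideanSpace ℝ (Fin n) → ℂ} (hw : Measurable w) {i l : ℕ} (hi : i ≤ l)
    (hfin : hNormSq n (l + n / 2) φ w < ⊤) :
    Integrable fun ξ ↦ ‖ξ‖ ^ i * ‖w ξ‖ := by
  refine ⟨by fun_prop, (hasFiniteIntegral_iff_ofReal (ae_of_all _ fun ξ ↦ by positivity)).2 ?_⟩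
  exact (lintegral_norm_pow_mul_le hm hφ hw.aemeasurable hi).trans_lt <| ENNReal.mul_lt_top
    (ENNReal.rpow_lt_top_of_nonneg (by norm_num) hfin.ne)
    (ENNReal.rpow_lt_top_of_nonneg (by norm_num) hk.lintegral_lt_top.ne)

lemma integral_norm_pow_mul_le (hm : Measurable φ) (hφ : ∀ t, 1 ≤ t → 0 < φ t)
    (hk : Integrable fun ξ : EuclideanSpace ℝ (Fin n) ↦ hWeight (-(n / 2)) φ⁻¹ ξ ^ 2)
    {w : EuclideanSpace ℝ (Fin n) → ℂ} (hw : Measurable w) {i l : ℕ} (hi : i ≤ l)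
    (hfin : hNormSq n (l + n / 2) φ w < ⊤) :
    ∫ ξ, ‖ξ‖ ^ i * ‖w ξ‖ ≤ (hNormSq n (l + n / 2) φ w).toReal ^ (1 / 2 : ℝ) *
      (∫ ξ : EuclideanSpace ℝ (Fin n), hWeight (-(n / 2)) φ⁻¹ ξ ^ 2) ^ (1 / 2 : ℝ) := by
  rw [integral_eq_lintegral_of_nonneg_ae (ae_of_all _ fun ξ ↦ by positivity) (by fun_prop),
    integral_eq_lintegral_of_nonneg_ae (ae_of_all _ fun ξ ↦ sq_nonneg _) hk.1,
    ENNReal.toReal_rpow, ENNReal.toReal_rpow, ← ENNReal.toReal_mul]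
  exact ENNReal.toReal_mono (ENNReal.mul_ne_top
    (ENNReal.rpow_ne_top_of_nonneg (by norm_num) hfin.ne)
    (ENNReal.rpow_ne_top_of_nonneg (by norm_num) hk.lintegral_lt_top.ne))
    (lintegral_norm_pow_mul_le hm hφ hw.aemeasurable hi)

end Moments

/-- Hörmander's embedding theorem (sufficiency): if `∫₁^∞ dt/(t φ(t)²) < ∞`, then every
`w ∈ H^{l+n/2,φ}(ℝⁿ)` (represented by its Fourier transform `ŵ`, so that
`w = 𝓕⁻¹ ŵ`) is of class `C^l` with bounded derivatives up to order `l`, and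
`sup_{|α| ≤ l} ‖∂^α w‖_∞ ≤ c ‖w‖_{l+n/2,φ}` with `c` independent of `w`. -/
theorem stmt5 (n : ℕ) (l : ℕ) (φ : ℝ → ℝ) (hφ : MemM φ)
    (hint : ∫⁻ t in Set.Ici (1 : ℝ), ENNReal.ofReal (1 / (t * φ t ^ 2)) < ⊤) :
    ∃ c : ℝ, 0 < c ∧ ∀ what : EuclideanSpace ℝ (Fin n) → ℂ, Measurable what →
      hNormSq n ((l : ℝ) + n / 2) φ what < ⊤ →
      ContDiff ℝ l (FourierTransformInv.fourierInv what) ∧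
      ∀ i : ℕ, i ≤ l → ∀ x : EuclideanSpace ℝ (Fin n),
        ‖iteratedFDeriv ℝ i (FourierTransformInv.fourierInv what) x‖ ≤
          c * (hNormSq n ((l : ℝ) + n / 2) φ what).toReal ^ (1 / 2 : ℝ) := by
  have hk := hφ.integrable_hWeight_neg_half_inv_sq (n := n) hint
  obtain ⟨hm, hpos, -, -⟩ := hφ
  set J := ∫ ξ : EuclideanSpace ℝ (Fin n), hWeight (-(n / 2)) φ⁻¹ ξ ^ 2
  refine ⟨(2 * Real.pi) ^ l * (J ^ (1 / 2 : ℝ) + 1), by positivity, fun w hw hfin ↦ ?_⟩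
  have hmom : ∀ i : ℕ, (i : ℕ∞) ≤ l → Integrable fun ξ ↦ ‖ξ‖ ^ i * ‖w ξ‖ :=
    fun i hi ↦ integrable_norm_pow_mul hm hpos hk hw (mod_cast hi) hfin
  refine ⟨Real.contDiff_fourierInv hmom, fun i hi x ↦ ?_⟩
  set N := (hNormSq n (l + n / 2) φ w).toReal ^ (1 / 2 : ℝ)
  calc _ ≤ (2 * Real.pi) ^ i * ∫ ξ, ‖ξ‖ ^ i * ‖w ξ‖ :=
        Real.norm_iteratedFDeriv_fourierInv_le hmom hw.aestronglyMeasurable (mod_cast hi) x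
    _ ≤ (2 * Real.pi) ^ l * (N * J ^ (1 / 2 : ℝ)) := by
        gcongr
        · linarith [Real.pi_gt_three]
        · exact integral_norm_pow_mul_le hm hpos hk hw hi hfin
    _ = (2 * Real.pi) ^ l * J ^ (1 / 2 : ℝ) * N := by ring
    _ ≤ (2 * Real.pi) ^ l * (J ^ (1 / 2 : ℝ) + 1) * N := by
        gcongr
        exact le_add_of_nonneg_right zero_le_one
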